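/- Fix integers K ≥ m ≥ 1, ε > 0, c : T_{K,m} → [0,1/K], and x, y ∈ [0,1]^K. Let P ∈ T_{K,m} and assume |x(i) − y(i)| ≤ ε for all i ∈ A(P) ∪ B(P). Let ε' ∈ (0,ε]. Then it is not possible that P_{c,ε}(x) and P_{c,ε'}(y) are descendants of two distinct children of P in the tree T_{K,m}. -/

import Mathlib

/-! Since the run on `x` passes through `P`, it did not stop there: every split of `B(P)`
has `x`-gap more than `6ε` away from the threshold `c(P) · range`. Moving from `x` to `y`
changes each gap, and (as `0 ≤ c(P) ≤ 1`) each threshold, by at most `2ε`. Hence the first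
`x`-split clearing the threshold has positive `y`-gap, so it is also the `y`-sorted split of
its size and clears the `y`-threshold; and no earlier `y`-split can clear it, since the
`x`-sorted split of the same size has the largest `x`-gap, which is more than `6ε` below the
threshold. So both runs take the same child of `P`. -/

open Classical

noncomputable section

namespace MPB

variable (K m : ℕ)

/-- Max of `x` over a finite set of coordinates. -/
def fmax (x : Fin K → ℝ) (S : Finset (Fin K)) : ℝ := sSup (x '' ↑S)

/-- Min of `x` over a finite set of coordinates. -/
def fmin (x : Fin K → ℝ) (S : Finset (Fin K)) : ℝ := sInf (x '' ↑S)

/-- range_B(x) = max_{k∈B} x(k) - min_{k∈B} x(k). -/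
def rangeX (x : Fin K → ℝ) (B : Finset (Fin K)) : ℝ := fmax K x B - fmin K x B

/-- gap of the child obtained by splitting `B` into `T > B \ T`:
gap = min_{k∈T} x(k) - max_{ℓ∈B\T} x(ℓ). -/
def gapX (x : Fin K → ℝ) (T B : Finset (Fin K)) : ℝ := fmin K x T - fmax K x (B \ T)

/-- i(P): the largest `i` such that the first `i` parts of the ordered partition `L`
have total size at most `m`. -/
def iIdx (L : List (Finset (Fin K))) : ℕ :=
  Nat.findGreatest (fun i => ((L.take i).map Finset.card).sum ≤ m) L.length

/-- A(P): the union of the first i(P) parts (the coordinates already identified as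
belonging to the top m). -/
def Aset (L : List (Finset (Fin K))) : Finset (Fin K) :=
  (L.take (iIdx K m L)).foldr (· ∪ ·) ∅

/-- B(P): the currently undecided part; `∅` if `|A(P)| = m`, else the part S_{i(P)+1}. -/
def Bset (L : List (Finset (Fin K))) : Finset (Fin K) :=
  if (Aset K m L).card = m then ∅ else L.getD (iIdx K m L) ∅

/-- A vertex of the tree T_{K,m} is encoded by the sequence of splits leading to it from
the root (head = most recently chosen top part): this recovers its underlying ordered
partition, by splitting at each step the then-current undecided set B into `T > B \ T`. -/
def partitionOf : List (Finset (Fin K)) → List (Finset (Fin K))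
  | [] => [Finset.univ]
  | T :: l =>
    let L := partitionOf l
    let i := iIdx K m L
    L.take i ++ [T, L.getD i ∅ \ T] ++ L.drop (i + 1)

/-- A(P) for a vertex of T_{K,m}. -/
def Anode (l : List (Finset (Fin K))) : Finset (Fin K) := Aset K m (partitionOf K m l)

/-- B(P) for a vertex of T_{K,m}. -/
def Bnode (l : List (Finset (Fin K))) : Finset (Fin K) := Bset K m (partitionOf K m l)

/-- Membership in T_{K,m}: each successive split must cut the current undecided set B
into a nonempty strict subset (the new top part) and the rest. The root is `[]`, a
vertex is a leaf iff its `Bnode` is empty, `T :: l` is a child of `l`, and the ancestors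
of a vertex are exactly its list suffixes. -/
def Valid : List (Finset (Fin K)) → Prop
  | [] => True
  | T :: l => Valid l ∧ T.Nonempty ∧ T ⊂ Bnode K m l

/-- The elements of `B` sorted by `x` in (weakly) decreasing order,
ties broken by coordinate index (stability of merge sort). -/
def sortedB (x : Fin K → ℝ) (B : Finset (Fin K)) : List (Fin K) :=
  (B.sort (· ≤ ·)).mergeSort (fun a b => decide (x b ≤ x a))

/-- The set `{a_1, …, a_j}` of the `j` largest coordinates of `B` under `x`. -/
def topSet (x : Fin K → ℝ) (B : Finset (Fin K)) (j : ℕ) : Finset (Fin K) :=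
  ((sortedB K x B).take j).toFinset

/-- Line 7 of Algorithm 1: the algorithm, currently at the vertex `l`, returns `l`
because for some ancestor `q ⪯ l` and some child `q_j` of `q` (splitting B(q) at the
`j`-th position of the `x`-sorted order), the quantity `gap_{q_j}(x) - c(q)·range_q(x)`
is within `(d(l,q)+1)·6ε` of zero. -/
def stopAt (c : List (Finset (Fin K)) → ℝ) (ε : ℝ) (x : Fin K → ℝ)
    (l : List (Finset (Fin K))) : Prop :=
  ∃ q ∈ l.tails, ∃ j, 1 ≤ j ∧ j < (Bnode K m q).card ∧
    |gapX K x (topSet K x (Bnode K m q) j) (Bnode K m q) - c q * rangeX K x (Bnode K m q)|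
      ≤ ((l.length - q.length + 1 : ℕ) : ℝ) * (6 * ε)

/-- Lines 10-15 of Algorithm 1: move from `l` to the child `l_j` for the smallest
`j ∈ {1, …, ℓ-1}` with `gap_{l_j}(x) ≥ c(l)·range_l(x)`. -/
def descend (c : List (Finset (Fin K)) → ℝ) (x : Fin K → ℝ)
    (l : List (Finset (Fin K))) : List (Finset (Fin K)) :=
  if h : ∃ j, 1 ≤ j ∧ j < (Bnode K m l).card ∧
      c l * rangeX K x (Bnode K m l)
        ≤ gapX K x (topSet K x (Bnode K m l) j) (Bnode K m l)
  then topSet K x (Bnode K m l) (Nat.find h) :: l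
  else l

/-- The while loop of Algorithm 1, with fuel (the tree T_{K,m} has depth < K, so fuel K
suffices for the loop to terminate as in the paper). -/
def run (c : List (Finset (Fin K)) → ℝ) (ε : ℝ) (x : Fin K → ℝ) :
    ℕ → List (Finset (Fin K)) → List (Finset (Fin K))
  | 0, l => l
  | n + 1, l =>
    if Bnode K m l = ∅ then l
    else if stopAt K m c ε x l then l
    else run c ε x n (descend K m c x l)

/-- The vertex P_{c,ε}(x) ∈ T_{K,m} output by Algorithm 1 on input x. The vertices
visited by the while loop are exactly the suffixes of the output. -/
def Pmap (c : List (Finset (Fin K)) → ℝ) (ε : ℝ) (x : Fin K → ℝ) :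
    List (Finset (Fin K)) :=
  run K m c ε x K []

variable {K m}

lemma le_fmax {x : Fin K → ℝ} {S : Finset (Fin K)} {a : Fin K} (ha : a ∈ S) :
    x a ≤ fmax K x S :=
  le_csSup (S.finite_toSet.image x).bddAbove ⟨a, ha, rfl⟩

lemma fmin_le {x : Fin K → ℝ} {S : Finset (Fin K)} {a : Fin K} (ha : a ∈ S) :
    fmin K x S ≤ x a :=
  csInf_le (S.finite_toSet.image x).bddBelow ⟨a, ha, rfl⟩

lemma fmax_le {x : Fin K → ℝ} {S : Finset (Fin K)} (hS : S.Nonempty) {μ : ℝ}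
    (h : ∀ a ∈ S, x a ≤ μ) : fmax K x S ≤ μ :=
  csSup_le ((Finset.coe_nonempty.2 hS).image x) (by rintro _ ⟨a, ha, rfl⟩; exact h a ha)

lemma le_fmin {x : Fin K → ℝ} {S : Finset (Fin K)} (hS : S.Nonempty) {μ : ℝ}
    (h : ∀ a ∈ S, μ ≤ x a) : μ ≤ fmin K x S :=
  le_csInf ((Finset.coe_nonempty.2 hS).image x) (by rintro _ ⟨a, ha, rfl⟩; exact h a ha)

lemma rangeX_nonneg {x : Fin K → ℝ} {B : Finset (Fin K)} (hB : B.Nonempty) :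
    0 ≤ rangeX K x B := by
  obtain ⟨a, ha⟩ := hB
  exact sub_nonneg.2 ((fmin_le ha).trans (le_fmax ha))

lemma gapX_le_sub {x : Fin K → ℝ} {T B : Finset (Fin K)} {t s : Fin K}
    (ht : t ∈ T) (hsB : s ∈ B) (hsT : s ∉ T) : gapX K x T B ≤ x t - x s :=
  sub_le_sub (fmin_le ht) (le_fmax (Finset.mem_sdiff.2 ⟨hsB, hsT⟩))

section Perturbation

variable {x y : Fin K → ℝ} {ε : ℝ}

lemma fmax_le_fmax_add {S : Finset (Fin K)} (hS : S.Nonempty)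
    (h : ∀ i ∈ S, |x i - y i| ≤ ε) : fmax K x S ≤ fmax K y S + ε :=
  fmax_le hS fun a ha => by linarith [(abs_le.1 (h a ha)).2, le_fmax (x := y) ha]

lemma fmin_sub_le_fmin {S : Finset (Fin K)} (hS : S.Nonempty)
    (h : ∀ i ∈ S, |x i - y i| ≤ ε) : fmin K y S - ε ≤ fmin K x S :=
  le_fmin hS fun a ha => by linarith [(abs_le.1 (h a ha)).1, fmin_le (x := y) ha]

lemma rangeX_le_add {B : Finset (Fin K)} (hB : B.Nonempty)
    (h : ∀ i ∈ B, |x i - y i| ≤ ε) : rangeX K x B ≤ rangeX K y B + 2 * ε := by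
  have := fmax_le_fmax_add hB h
  have := fmin_sub_le_fmin hB h
  unfold rangeX
  linarith

lemma gapX_sub_le {T B : Finset (Fin K)} (hT : T.Nonempty) (hBT : (B \ T).Nonempty)
    (hTB : T ⊆ B) (h : ∀ i ∈ B, |x i - y i| ≤ ε) :
    gapX K y T B - 2 * ε ≤ gapX K x T B := by
  have := fmin_sub_le_fmin hT fun i hi => h i (hTB hi)
  have := fmax_le_fmax_add hBT fun i hi => h i (Finset.mem_sdiff.1 hi).1
  unfold gapX
  linarith

end Perturbation

section TopSet

variable {x : Fin K → ℝ} {B : Finset (Fin K)} {j : ℕ}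

lemma sortedB_perm (x : Fin K → ℝ) (B : Finset (Fin K)) :
    (sortedB K x B).Perm (B.sort (· ≤ ·)) :=
  List.mergeSort_perm _ _

lemma mem_sortedB {a : Fin K} : a ∈ sortedB K x B ↔ a ∈ B := by
  rw [(sortedB_perm x B).mem_iff, Finset.mem_sort]

lemma pairwise_sortedB (x : Fin K → ℝ) (B : Finset (Fin K)) :
    (sortedB K x B).Pairwise (fun a b => x b ≤ x a) := by
  have h := List.pairwise_mergeSort (le := fun a b : Fin K => decide (x b ≤ x a))
    (by intro a b c hab hbc; simp only [decide_eq_true_eq] at *; exact hbc.trans hab)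
    (by intro a b; simpa using le_total (x b) (x a)) (B.sort (· ≤ ·))
  simpa [sortedB] using h

lemma topSet_subset : topSet K x B j ⊆ B := fun _ ha =>
  mem_sortedB.1 (List.mem_of_mem_take (List.mem_toFinset.1 ha))

lemma card_topSet (h : j ≤ B.card) : (topSet K x B j).card = j := by
  have hnodup := (sortedB_perm x B).nodup_iff.2 (B.sort_nodup _)
  rw [topSet, List.toFinset_card_of_nodup ((List.take_sublist _ _).nodup hnodup),
    List.length_take, (sortedB_perm x B).length_eq, Finset.length_sort]
  omega

lemma topSet_nonempty (hj : 1 ≤ j) (hjB : j < B.card) : (topSet K x B j).Nonempty := by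
  rw [← Finset.card_pos, card_topSet hjB.le]
  omega

lemma sdiff_topSet_nonempty (hjB : j < B.card) : (B \ topSet K x B j).Nonempty := by
  rw [← Finset.card_pos, Finset.card_sdiff_of_subset topSet_subset, card_topSet hjB.le]
  omega

lemma le_of_mem_topSet {a b : Fin K} (ha : a ∈ topSet K x B j) (hbB : b ∈ B)
    (hb : b ∉ topSet K x B j) : x b ≤ x a := by
  have hsplit := pairwise_sortedB x B
  rw [← List.take_append_drop j (sortedB K x B), List.pairwise_append] at hsplit
  refine hsplit.2.2 a (List.mem_toFinset.1 ha) b ?_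
  have hb' : b ∈ sortedB K x B := mem_sortedB.2 hbB
  rw [← List.take_append_drop j (sortedB K x B), List.mem_append] at hb'
  exact hb'.resolve_left fun h => hb (List.mem_toFinset.2 h)

end TopSet

lemma exists_mem_notMem_of_card_le_of_ne {α : Type*} {S T : Finset α}
    (h : T.card ≤ S.card) (hne : S ≠ T) : ∃ a ∈ S, a ∉ T := by
  by_contra! hsub
  exact hne (Finset.eq_of_subset_of_card_le hsub h)

section Splits

variable {x : Fin K → ℝ} {B T : Finset (Fin K)} {j : ℕ}

lemma gapX_le_gapX_topSet (hTB : T ⊆ B) (hT : T.card = j) (hj : 1 ≤ j) (hjB : j < B.card) :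
    gapX K x T B ≤ gapX K x (topSet K x B j) B := by
  by_cases hne : T = topSet K x B j
  · rw [← hne]
  have hcard : (topSet K x B j).card = T.card := by rw [card_topSet hjB.le, hT]
  obtain ⟨t, htT, ht⟩ := exists_mem_notMem_of_card_le_of_ne hcard.le hne
  obtain ⟨s, hs, hsT⟩ := exists_mem_notMem_of_card_le_of_ne hcard.ge (Ne.symm hne)
  have hmin : x t ≤ fmin K x (topSet K x B j) :=
    le_fmin (topSet_nonempty hj hjB) fun a ha => le_of_mem_topSet ha (hTB htT) ht
  have hmax : fmax K x (B \ topSet K x B j) ≤ x s :=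
    fmax_le (sdiff_topSet_nonempty hjB) fun b hb =>
      le_of_mem_topSet hs (Finset.mem_sdiff.1 hb).1 (Finset.mem_sdiff.1 hb).2
  have := gapX_le_sub (x := x) htT (topSet_subset hs) hsT
  unfold gapX at *
  linarith

lemma topSet_eq_of_gapX_pos (hTB : T ⊆ B) (hT : T.card = j) (hjB : j < B.card)
    (hpos : 0 < gapX K x T B) : topSet K x B j = T := by
  by_contra hne
  have hcard : (topSet K x B j).card = T.card := by rw [card_topSet hjB.le, hT]
  obtain ⟨s, hs, hsT⟩ := exists_mem_notMem_of_card_le_of_ne hcard.ge hne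
  obtain ⟨t, htT, ht⟩ := exists_mem_notMem_of_card_le_of_ne hcard.le (Ne.symm hne)
  linarith [gapX_le_sub (x := x) htT (topSet_subset hs) hsT,
    le_of_mem_topSet hs (hTB htT) ht]

end Splits

section Stability

variable {x y : Fin K → ℝ} {B : Finset (Fin K)} {ε a : ℝ}

lemma mul_rangeX_le_add (hε : 0 ≤ ε) (ha₀ : 0 ≤ a) (ha₁ : a ≤ 1) (hB : B.Nonempty)
    (hxy : ∀ i ∈ B, |x i - y i| ≤ ε) : a * rangeX K x B ≤ a * rangeX K y B + 2 * ε := by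
  have := rangeX_le_add hB hxy
  nlinarith

lemma topSet_find_eq_of_far (hε : 0 ≤ ε) (ha₀ : 0 ≤ a) (ha₁ : a ≤ 1)
    (hxy : ∀ i ∈ B, |x i - y i| ≤ ε)
    (hfar : ∀ j, 1 ≤ j → j < B.card →
      6 * ε < |gapX K x (topSet K x B j) B - a * rangeX K x B|)
    (hx : ∃ j, 1 ≤ j ∧ j < B.card ∧ a * rangeX K x B ≤ gapX K x (topSet K x B j) B)
    (hy : ∃ j, 1 ≤ j ∧ j < B.card ∧ a * rangeX K y B ≤ gapX K y (topSet K y B j) B) :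
    topSet K y B (Nat.find hy) = topSet K x B (Nat.find hx) := by
  obtain ⟨hj₁, hjB, hjx⟩ := Nat.find_spec hx
  obtain ⟨hk₁, hkB, hky⟩ := Nat.find_spec hy
  set j := Nat.find hx
  set k := Nat.find hy
  have hB : B.Nonempty := Finset.card_pos.1 (by omega)
  have hyx : ∀ i ∈ B, |y i - x i| ≤ ε := fun i hi => by rw [abs_sub_comm]; exact hxy i hi
  have hrxy := mul_rangeX_le_add hε ha₀ ha₁ hB hxy
  have hryx := mul_rangeX_le_add hε ha₀ ha₁ hB hyx
  have hfar_j := hfar j hj₁ hjB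
  rw [abs_of_nonneg (sub_nonneg.2 hjx)] at hfar_j
  have hgap_y := gapX_sub_le (topSet_nonempty (x := x) hj₁ hjB) (sdiff_topSet_nonempty hjB)
    topSet_subset hyx
  have hS : topSet K y B j = topSet K x B j := by
    refine topSet_eq_of_gapX_pos topSet_subset (card_topSet hjB.le) hjB ?_
    nlinarith [rangeX_nonneg (x := y) hB]
  have hkj : k ≤ j := Nat.find_min' hy ⟨hj₁, hjB, by rw [hS]; linarith⟩
  suffices k = j by rw [this, hS]
  by_contra hne
  have hkx : gapX K x (topSet K x B k) B < a * rangeX K x B :=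
    not_le.1 fun h => Nat.find_min hx (lt_of_le_of_ne hkj hne) ⟨hk₁, hkB, h⟩
  have hfar_k := hfar k hk₁ hkB
  rw [abs_of_neg (sub_neg.2 hkx)] at hfar_k
  have := gapX_le_gapX_topSet (x := x) (topSet_subset (x := y)) (card_topSet hkB.le) hk₁ hkB
  have := gapX_sub_le (topSet_nonempty (x := y) hk₁ hkB) (sdiff_topSet_nonempty hkB)
    topSet_subset hxy
  linarith

end Stability

section Algorithm

variable {c : List (Finset (Fin K)) → ℝ} {ε : ℝ} {x : Fin K → ℝ}

lemma far_of_not_stopAt {l : List (Finset (Fin K))} (h : ¬ stopAt K m c ε x l) :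
    ∀ j, 1 ≤ j → j < (Bnode K m l).card →
      6 * ε < |gapX K x (topSet K x (Bnode K m l) j) (Bnode K m l)
        - c l * rangeX K x (Bnode K m l)| := by
  intro j hj₁ hjB
  by_contra! hle
  exact h ⟨l, (List.mem_tails _ _).2 (List.suffix_refl l), j, hj₁, hjB, by simpa using hle⟩

lemma descend_eq_self_or_cons (c : List (Finset (Fin K)) → ℝ) (x : Fin K → ℝ)
    (l : List (Finset (Fin K))) :
    descend K m c x l = l ∨ ∃ T, descend K m c x l = T :: l := by
  unfold descend
  split
  · exact Or.inr ⟨_, rfl⟩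
  · exact Or.inl rfl

lemma exists_eq_topSet_find_of_descend_eq_cons {l : List (Finset (Fin K))}
    {T : Finset (Fin K)} (h : descend K m c x l = T :: l) :
    ∃ h' : ∃ j, 1 ≤ j ∧ j < (Bnode K m l).card ∧
        c l * rangeX K x (Bnode K m l) ≤ gapX K x (topSet K x (Bnode K m l) j) (Bnode K m l),
      T = topSet K x (Bnode K m l) (Nat.find h') := by
  unfold descend at h
  split_ifs at h with h'
  · exact ⟨h', (List.cons.inj h).1.symm⟩
  · exact absurd h.symm (List.cons_ne_self _ _)

lemma suffix_run (n : ℕ) (l : List (Finset (Fin K))) : l <:+ run K m c ε x n l := by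
  induction n generalizing l with
  | zero => exact List.suffix_refl l
  | succ n ih =>
    rw [run]
    split_ifs
    · exact List.suffix_refl l
    · exact List.suffix_refl l
    · rcases descend_eq_self_or_cons (m := m) c x l with hd | ⟨T, hd⟩
      · rw [hd]; exact ih l
      · rw [hd]; exact (List.suffix_cons T l).trans (ih _)

lemma not_stopAt_and_descend_of_cons_suffix_run {P : List (Finset (Fin K))}
    {T : Finset (Fin K)} (n : ℕ) {l : List (Finset (Fin K))} (hl : l <:+ P)
    (h : T :: P <:+ run K m c ε x n l) :
    ¬ stopAt K m c ε x P ∧ descend K m c x P = T :: P := by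
  induction n generalizing l with
  | zero => exact absurd (h.trans hl).length_le (by simp)
  | succ n ih =>
    rw [run] at h
    split_ifs at h with _ hstop
    · exact absurd (h.trans hl).length_le (by simp)
    · exact absurd (h.trans hl).length_le (by simp)
    rcases descend_eq_self_or_cons (m := m) c x l with hd | ⟨U, hd⟩
    · exact ih hl (hd ▸ h)
    rw [hd] at h
    have hU : U :: l <:+ run K m c ε x n (U :: l) := suffix_run n _
    rcases hl.length_le.lt_or_eq with hlt | heq
    · exact ih (List.suffix_of_suffix_length_le hU ((List.suffix_cons T P).trans h)
        (by simpa using hlt)) h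
    · obtain rfl := hl.eq_of_length heq
      refine ⟨hstop, hd.trans ?_⟩
      exact ((List.suffix_of_suffix_length_le h hU (by simp)).eq_of_length (by simp)).symm

end Algorithm

theorem stmt6_general (K m : ℕ) (hm : 1 ≤ m) (hK : m ≤ K) (ε : ℝ) (hε : 0 < ε)
    (c : List (Finset (Fin K)) → ℝ)
    (hc : ∀ l, Valid K m l → c l ∈ Set.Icc (0 : ℝ) (1 / K))
    (x y : Fin K → ℝ)
    (P : List (Finset (Fin K))) (hP : Valid K m P)
    (hxy : ∀ i ∈ Anode K m P ∪ Bnode K m P, |x i - y i| ≤ ε)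
    (ε' : ℝ) :
    ¬ ∃ T₁ T₂ : Finset (Fin K), T₁ ≠ T₂ ∧
        (T₁ :: P) <:+ Pmap K m c ε x ∧ (T₂ :: P) <:+ Pmap K m c ε' y := by
  rintro ⟨T₁, T₂, hne, h₁, h₂⟩
  obtain ⟨hstop, hd₁⟩ := not_stopAt_and_descend_of_cons_suffix_run K List.nil_suffix h₁
  obtain ⟨-, hd₂⟩ := not_stopAt_and_descend_of_cons_suffix_run K List.nil_suffix h₂
  obtain ⟨hx, rfl⟩ := exists_eq_topSet_find_of_descend_eq_cons hd₁
  obtain ⟨hy, rfl⟩ := exists_eq_topSet_find_of_descend_eq_cons hd₂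
  have hK₁ : (1 : ℝ) ≤ K := by exact_mod_cast hm.trans hK
  have hc₁ : c P ≤ 1 := (hc P hP).2.trans (div_le_one_of_le₀ hK₁ K.cast_nonneg)
  exact hne (topSet_find_eq_of_far hε.le (hc P hP).1 hc₁
    (fun i hi => hxy i (Finset.mem_union_right _ hi)) (far_of_not_stopAt hstop) hx hy).symm

/-- Lemma 2.4, item 2: if |x(i) - y(i)| ≤ ε on A(P) ∪ B(P) and 0 < ε' ≤ ε, then
P_{c,ε}(x) and P_{c,ε'}(y) cannot be descendants of two distinct children of P.
(A descendant of a vertex is a list having it as a suffix.) -/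
theorem stmt6 (K m : ℕ) (hm : 1 ≤ m) (hK : m ≤ K) (ε : ℝ) (hε : 0 < ε)
    (c : List (Finset (Fin K)) → ℝ)
    (hc : ∀ l, Valid K m l → c l ∈ Set.Icc (0 : ℝ) (1 / K))
    (x y : Fin K → ℝ)
    (hx : ∀ i, x i ∈ Set.Icc (0 : ℝ) 1) (hy : ∀ i, y i ∈ Set.Icc (0 : ℝ) 1)
    (P : List (Finset (Fin K))) (hP : Valid K m P)
    (hxy : ∀ i ∈ Anode K m P ∪ Bnode K m P, |x i - y i| ≤ ε)
    (ε' : ℝ) (hε'pos : 0 < ε') (hε'le : ε' ≤ ε) :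
    ¬ ∃ T₁ T₂ : Finset (Fin K), T₁ ≠ T₂ ∧
        (T₁ :: P) <:+ Pmap K m c ε x ∧ (T₂ :: P) <:+ Pmap K m c ε' y :=
  stmt6_general K m hm hK ε hε c hc x y P hP hxy ε'

end MPB
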